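/- Let X = AGL₂(3). Then every automorphism of X is inner, i.e., Aut(X) = Inn(X) ≅ X. -/

import Mathlib

abbrev GL23 := Matrix.GeneralLinearGroup (Fin 2) (ZMod 3)
abbrev V23 := Multiplicative (Fin 2 → ZMod 3)

def glAddAut (g : GL23) : (Fin 2 → ZMod 3) ≃+ (Fin 2 → ZMod 3) where
  toFun v := (g : Matrix (Fin 2) (Fin 2) (ZMod 3)).mulVec v
  invFun v := ((g⁻¹ : GL23) : Matrix (Fin 2) (Fin 2) (ZMod 3)).mulVec v
  left_inv v := by
    have hd : IsUnit ((g : Matrix (Fin 2) (Fin 2) (ZMod 3)).det) :=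
      (Matrix.isUnit_iff_isUnit_det _).mp g.isUnit
    simp [Matrix.mulVec_mulVec, Matrix.nonsing_inv_mul _ hd, -Matrix.mulVec_fin_two]
  right_inv v := by
    have hd : IsUnit ((g : Matrix (Fin 2) (Fin 2) (ZMod 3)).det) :=
      (Matrix.isUnit_iff_isUnit_det _).mp g.isUnit
    simp [Matrix.mulVec_mulVec, Matrix.mul_nonsing_inv _ hd, -Matrix.mulVec_fin_two]
  map_add' x y := Matrix.mulVec_add _ x y

def aglPhi : GL23 →* MulAut V23 where
  toFun g := AddEquiv.toMultiplicative (glAddAut g)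
  map_one' := by
    ext v
    simp [glAddAut, AddEquiv.toMultiplicative]
  map_mul' g h := by
    ext v
    simp [glAddAut, AddEquiv.toMultiplicative, Matrix.mulVec_mulVec, -Matrix.mulVec_fin_two]

/-- The affine group `AGL₂(3) = (F₃)² ⋊ GL₂(3)`. -/
def AGL23 := SemidirectProduct V23 GL23 aglPhi

instance : Group AGL23 := SemidirectProduct.instGroup

/-!
The translation subgroup `V = F₃²` is minimal normal (`GL₂(3)` is transitive on `V ∖ {0}`) and
self-centralizing (`GL₂(3)` acts faithfully), so it is characteristic: if `f(V) ≠ V` then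
`f(V) ∩ V = 1`, whence `f(V)` centralizes `V` and lies in `V`. An automorphism thus restricts to an
element of `Aut V = GL₂(3)`; after composing with the matching inner automorphism it fixes `V`
pointwise and sends `g` to `c(g) g` for a crossed homomorphism `c : GL₂(3) → V`. The central
element `-1` acts on `V` by inversion, and since `V` has exponent `3`, comparing `c(g · -1)` with
`c(-1 · g)` shows that `c` is the coboundary of `c(-1)⁻¹`, so the automorphism is inner. The same
element `-1` fixes no nonzero vector, which makes the centre trivial.
-/

theorem exists_linearEquiv_apply_eq {K V : Type*} [Field K] [AddCommGroup V] [Module K V]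
    {v w : V} (hv : v ≠ 0) (hw : w ≠ 0) : ∃ e : V ≃ₗ[K] V, e v = w := by
  obtain ⟨e, he⟩ := Submodule.exists_linearEquiv_restrict_eq
    ((LinearEquiv.toSpanNonzeroSingleton K V v hv).symm ≪≫ₗ
      LinearEquiv.toSpanNonzeroSingleton K V w hw)
  have hv1 : (LinearEquiv.toSpanNonzeroSingleton K V v hv).symm
      ⟨v, Submodule.mem_span_singleton_self v⟩ = 1 := by
    rw [LinearEquiv.symm_apply_eq, LinearEquiv.toSpanNonzeroSingleton_one]
  refine ⟨e, ?_⟩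
  simpa [hv1] using (he ⟨v, Submodule.mem_span_singleton_self v⟩).symm

namespace SemidirectProduct

variable {N G : Type*} [CommGroup N] [Group G] {φ : G →* MulAut N}

theorem mul_inl_mul_inv (x : N ⋊[φ] G) (n : N) : x * inl n * x⁻¹ = inl (φ x.right n) := by
  ext <;> simp [mul_comm]

theorem mem_range_inl_iff {x : N ⋊[φ] G} : x ∈ (inl : N →* N ⋊[φ] G).range ↔ x.right = 1 := by
  rw [range_inl_eq_ker_rightHom, MonoidHom.mem_ker, rightHom_eq_right]

theorem right_eq_one_of_forall_commute_inl (hφ : Function.Injective φ) {x : N ⋊[φ] G}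
    (hx : ∀ n, Commute x (inl n)) : x.right = 1 := by
  refine hφ (MulEquiv.ext fun n => inl_injective (φ := φ) ?_)
  rw [map_one, MulAut.one_apply, ← mul_inl_mul_inv, (hx n).eq, mul_inv_cancel_right]

theorem eq_bot_or_eq_range_inl_of_le (htrans : ∀ v w : N, v ≠ 1 → w ≠ 1 → ∃ g, φ g v = w)
    {K : Subgroup (N ⋊[φ] G)} [hK : K.Normal] (hle : K ≤ inl.range) :
    K = ⊥ ∨ K = inl.range := by
  refine K.bot_or_exists_ne_one.imp_right fun ⟨x, hxK, hx1⟩ => le_antisymm hle ?_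
  obtain ⟨v, hv⟩ := hle hxK
  rintro _ ⟨w, rfl⟩
  rcases eq_or_ne w 1 with rfl | hw
  · simp [K.one_mem]
  obtain ⟨g, rfl⟩ := htrans v w (by rintro rfl; simp [← hv] at hx1) hw
  rw [inl_aut, hv, map_inv]
  exact hK.conj_mem _ hxK _

theorem characteristic_range_inl (hφ : Function.Injective φ)
    (htrans : ∀ v w : N, v ≠ 1 → w ≠ 1 → ∃ g, φ g v = w) :
    (inl : N →* N ⋊[φ] G).range.Characteristic := by
  refine Subgroup.characteristic_iff_le_map.mpr fun f => ?_
  have hV : (inl : N →* N ⋊[φ] G).range.Normal := by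
    rw [range_inl_eq_ker_rightHom]; infer_instance
  have hfV : (inl.range.map f.toMonoidHom).Normal := hV.map _ f.surjective
  rcases eq_bot_or_eq_range_inl_of_le htrans (K := inl.range.map f.toMonoidHom ⊓ inl.range)
    inf_le_right with h | h
  · have hle : inl.range.map f.toMonoidHom ≤ inl.range := fun x hx =>
      mem_range_inl_iff.mpr <| right_eq_one_of_forall_commute_inl hφ fun n =>
        Subgroup.commute_of_normal_of_disjoint _ _ hfV hV (disjoint_iff.mpr h) x _ hx ⟨n, rfl⟩
    rw [inf_eq_left.mpr hle, Subgroup.map_eq_bot_iff_of_injective _ f.injective] at h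
    simp [h]
  · exact inf_eq_right.mp h

theorem exists_mulAut_forall_apply_inl_eq [hV : (inl : N →* N ⋊[φ] G).range.Characteristic]
    (f : MulAut (N ⋊[φ] G)) : ∃ α : MulAut N, ∀ n, f (inl n) = inl (α n) := by
  let e := MonoidHom.ofInjective (inl_injective (φ := φ))
  have hf : inl.range.map (f : N ⋊[φ] G →* N ⋊[φ] G) = inl.range :=
    Subgroup.characteristic_iff_map_eq.mp hV f
  refine ⟨e.trans ((f.subgroupMap _).trans ((MulEquiv.subgroupCongr hf).trans e.symm)),
    fun n => ?_⟩
  rw [MulEquiv.trans_apply, MulEquiv.trans_apply, MulEquiv.trans_apply,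
    MonoidHom.apply_ofInjective_symm]
  rfl

theorem right_apply_inr_of_forall_apply_inl_eq_self (hφ : Function.Injective φ)
    {f : MulAut (N ⋊[φ] G)} (hf : ∀ n, f (inl n) = inl n) (g : G) : (f (inr g)).right = g := by
  refine hφ (MulEquiv.ext fun n => inl_injective (φ := φ) ?_)
  rw [← mul_inl_mul_inv, ← hf n, ← hf (φ g n), inl_aut]
  simp only [map_mul, map_inv]

theorem exists_eq_conj_inl_of_forall_apply_inl_eq_self (hφ : Function.Injective φ)
    (hN : ∀ n : N, n ^ 3 = 1) {z : G} (hz : z ∈ Subgroup.center G) (hφz : ∀ n, φ z n = n⁻¹)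
    {f : MulAut (N ⋊[φ] G)} (hf : ∀ n, f (inl n) = inl n) :
    ∃ n, f = MulAut.conj (inl n) := by
  set c : G → N := fun g => (f (inr g)).left
  have hc : ∀ g, f (inr g) = inl (c g) * inr g := fun g => by
    have h := inl_left_mul_inr_right (f (inr g))
    rw [right_apply_inr_of_forall_apply_inl_eq_self hφ hf g] at h
    exact h.symm
  have hmul : ∀ g h, c (g * h) = c g * φ g (c h) := fun g h => by
    simp only [c, map_mul, mul_left, right_apply_inr_of_forall_apply_inl_eq_self hφ hf]
  have hcoboundary : ∀ g, c g = φ g (c z) * (c z)⁻¹ := fun g => by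
    have h := hmul g z
    rw [Subgroup.mem_center_iff.mp hz g, hmul, hφz] at h
    have hinv : (c g)⁻¹ = c g * c g := inv_eq_of_mul_eq_one_right (by rw [← pow_three, hN])
    rw [hinv] at h
    rw [eq_mul_inv_iff_mul_eq]
    apply mul_left_cancel (a := c g)
    rw [← h]
    ac_rfl
  refine ⟨(c z)⁻¹, MulEquiv.toMonoidHom_injective (hom_ext ?_ ?_)⟩
  · refine MonoidHom.ext fun n => ?_
    simp only [MonoidHom.comp_apply, MulEquiv.coe_toMonoidHom, MulAut.conj_apply, hf,
      mul_inl_mul_inv, right_inl, map_one, MulAut.one_apply]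
  · refine MonoidHom.ext fun g => ?_
    simp only [MonoidHom.comp_apply, MulEquiv.coe_toMonoidHom, MulAut.conj_apply, hc]
    rw [hcoboundary g]
    ext <;> simp [mul_comm]

theorem conj_injective (hφ : Function.Injective φ) (hN : ∀ n : N, n ^ 3 = 1) {z : G}
    (hφz : ∀ n, φ z n = n⁻¹) :
    Function.Injective (MulAut.conj : N ⋊[φ] G →* MulAut (N ⋊[φ] G)) := by
  refine (injective_iff_map_eq_one _).mpr fun x hx => ?_
  have hcomm : ∀ y, Commute x y := fun y => by
    rw [commute_iff_eq, ← mul_inv_eq_iff_eq_mul, ← MulAut.conj_apply, hx, MulAut.one_apply]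
  have hx : x = inl x.left :=
    (inl_left_mul_inr_right x).symm.trans <| by
      rw [right_eq_one_of_forall_commute_inl hφ fun n => hcomm _, map_one, mul_one]
  have hinv : x.left⁻¹ = x.left := by
    have h : inr z * x * (inr z)⁻¹ = x := mul_inv_eq_iff_eq_mul.mpr (hcomm (inr z)).eq.symm
    rw [hx, mul_inl_mul_inv, right_inr, hφz] at h
    exact inl_injective h
  have hleft : x.left = 1 := calc
    x.left = x.left * (x.left * x.left⁻¹) := by rw [mul_inv_cancel, mul_one]
    _ = x.left ^ 3 := by rw [hinv, pow_three]
    _ = 1 := hN _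
  rw [hx, hleft, map_one]

theorem conj_surjective (hφ : Function.Bijective φ)
    (htrans : ∀ v w : N, v ≠ 1 → w ≠ 1 → ∃ g, φ g v = w) (hN : ∀ n : N, n ^ 3 = 1) {z : G}
    (hz : z ∈ Subgroup.center G) (hφz : ∀ n, φ z n = n⁻¹) :
    Function.Surjective (MulAut.conj : N ⋊[φ] G →* MulAut (N ⋊[φ] G)) := by
  intro f
  obtain ⟨α, hα⟩ :=
    exists_mulAut_forall_apply_inl_eq (hV := characteristic_range_inl hφ.1 htrans) f
  obtain ⟨g, rfl⟩ := hφ.2 α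
  obtain ⟨n, hn⟩ := exists_eq_conj_inl_of_forall_apply_inl_eq_self hφ.1 hN hz hφz
    (f := (MulAut.conj (inr g))⁻¹ * f) fun n => by
      rw [MulAut.mul_apply, hα, ← map_inv, MulAut.conj_apply, mul_inl_mul_inv, inv_right,
        right_inr, map_inv, MulAut.inv_apply, MulEquiv.symm_apply_apply]
  exact ⟨inr g * inl n, by rw [map_mul, ← hn, mul_inv_cancel_left]⟩

theorem conj_bijective (hφ : Function.Bijective φ)
    (htrans : ∀ v w : N, v ≠ 1 → w ≠ 1 → ∃ α : MulAut N, α v = w) (hN : ∀ n : N, n ^ 3 = 1) :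
    Function.Bijective (MulAut.conj : N ⋊[φ] G →* MulAut (N ⋊[φ] G)) := by
  obtain ⟨z, hz⟩ := hφ.2 (MulEquiv.inv N)
  have hzc : z ∈ Subgroup.center G := Subgroup.mem_center_iff.mpr fun g =>
    hφ.1 (MulEquiv.ext fun n => by simp [hz])
  refine ⟨conj_injective hφ.1 hN (z := z) (by simp [hz]),
    conj_surjective hφ ?_ hN hzc (by simp [hz])⟩
  intro v w hv hw
  obtain ⟨α, hα⟩ := htrans v w hv hw
  obtain ⟨g, rfl⟩ := hφ.2 α
  exact ⟨g, hα⟩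

end SemidirectProduct

open Multiplicative

lemma aglPhi_apply (g : GL23) (v : V23) :
    aglPhi g v = ofAdd (Matrix.mulVec (g : Matrix (Fin 2) (Fin 2) (ZMod 3)) v.toAdd) := rfl

lemma aglPhi_injective : Function.Injective aglPhi := by
  intro g h hgh
  apply Units.ext
  apply Matrix.toLin'.injective
  refine LinearMap.ext fun v => ?_
  simpa [Matrix.toLin'_apply, aglPhi_apply] using congr(toAdd ($hgh (ofAdd v)))

lemma aglPhi_surjective : Function.Surjective aglPhi := by
  intro α
  let e := AddEquiv.toMultiplicative.symm α
  let L : (Fin 2 → ZMod 3) ≃ₗ[ZMod 3] (Fin 2 → ZMod 3) :=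
    LinearEquiv.ofBijective (e.toAddMonoidHom.toZModLinearMap 3) e.bijective
  refine ⟨Matrix.GeneralLinearGroup.toLin.symm (LinearMap.GeneralLinearGroup.ofLinearEquiv L), ?_⟩
  ext v : 1
  rw [aglPhi_apply, ← Matrix.mulVecLin_apply, ← Matrix.GeneralLinearGroup.coe_toLin,
    MulEquiv.apply_symm_apply]
  rfl

lemma v23_pow_three_eq_one (v : V23) : v ^ 3 = 1 := by
  decide +revert

lemma exists_mulAut_v23_apply_eq {v w : V23} (hv : v ≠ 1) (hw : w ≠ 1) :
    ∃ α : MulAut V23, α v = w := by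
  obtain ⟨e, he⟩ := exists_linearEquiv_apply_eq (K := ZMod 3) (V := Fin 2 → ZMod 3)
    (v := v.toAdd) (w := w.toAdd) hv hw
  exact ⟨AddEquiv.toMultiplicative e.toAddEquiv, he⟩

/-- Every automorphism of `X = AGL₂(3)` is inner; since `Z(X) = 1` the
conjugation map `X → Aut(X)` is in fact bijective, so `Aut(X) = Inn(X) ≅ X`. -/
theorem stmt11 :
    Function.Bijective ⇑(MulAut.conj : AGL23 →* MulAut AGL23) :=
  SemidirectProduct.conj_bijective ⟨aglPhi_injective, aglPhi_surjective⟩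
    (fun _ _ => exists_mulAut_v23_apply_eq) v23_pow_three_eq_one
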